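/- arXiv:1805.08672 — 3 statements merged into one kernel-verified Lean document; each statement's English description precedes it below -/
import Mathlib

section
/- HSIC(u, v), defined as the squared Hilbert-Schmidt norm of the cross-covariance operator C_{uv}, satisfies HSIC(u, v) = E[k(u,u') l(v,v')] + E[k(u,u')] E[l(v,v')] − 2 E_{(u,v)}[ E_{u'}[k(u,u')] E_{v'}[l(v,v')] ], where (u,v), (u',v'), (u'',v'') are iid copies of the joint random variable. -/
open MeasureTheory

/-! Expanding `‖a - b‖² = ⟪a, a⟫ + ⟪b, b⟫ - 2 ⟪a, b⟫` for the two kernel mean embeddings and pulling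
the Bochner integrals out of the inner products turns each term into a double integral of
`⟪Φ p, Φ q⟫ = k p.1 q.1 * l p.2 q.2`; over the product of the marginals these double integrals
factor by Fubini. -/

section KernelMeanEmbedding

variable {T : Type*} [NormedAddCommGroup T] [InnerProductSpace ℝ T] [CompleteSpace T]
  {γ δ : Type*} [MeasurableSpace γ] [MeasurableSpace δ]

theorem inner_integral_integral {μ : Measure γ} {ν : Measure δ} {f : γ → T} {g : δ → T}
    (hf : Integrable f μ) (hg : Integrable g ν) :
    inner ℝ (∫ p, f p ∂μ) (∫ q, g q ∂ν) = ∫ p, ∫ q, inner ℝ (f p) (g q) ∂ν ∂μ := by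
  rw [real_inner_comm, ← integral_inner hf]
  congr with p
  rw [real_inner_comm, ← integral_inner hg]

theorem norm_integral_sub_integral_sq {μ ν : Measure γ} {Φ : γ → T}
    (hμ : Integrable Φ μ) (hν : Integrable Φ ν) :
    ‖(∫ p, Φ p ∂μ) - ∫ p, Φ p ∂ν‖ ^ 2
      = (∫ p, ∫ q, inner ℝ (Φ p) (Φ q) ∂μ ∂μ) + (∫ p, ∫ q, inner ℝ (Φ p) (Φ q) ∂ν ∂ν)
        - 2 * ∫ p, ∫ q, inner ℝ (Φ p) (Φ q) ∂ν ∂μ := by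
  rw [norm_sub_sq_real, ← real_inner_self_eq_norm_sq, ← real_inner_self_eq_norm_sq,
    inner_integral_integral hμ hμ, inner_integral_integral hν hν, inner_integral_integral hμ hν]
  ring

end KernelMeanEmbedding

theorem hsic_expectation_formula_general
    {Ω α β : Type*} [MeasurableSpace Ω] [MeasurableSpace α] [MeasurableSpace β]
    (P : Measure Ω) [IsProbabilityMeasure P]
    {T : Type*} [NormedAddCommGroup T] [InnerProductSpace ℝ T] [CompleteSpace T]
    (k : α → α → ℝ) (l : β → β → ℝ)
    (Φ : α × β → T) (hΦm : StronglyMeasurable Φ) (hΦb : ∃ Cb : ℝ, ∀ p, ‖Φ p‖ ≤ Cb)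
    (hΦ : ∀ x x' y y', (inner ℝ (Φ (x, y)) (Φ (x', y')) : ℝ) = k x x' * l y y')
    (u : Ω → α) (v : Ω → β) :
    ‖(∫ p, Φ p ∂(P.map fun ω => (u ω, v ω)))
        - ∫ p, Φ p ∂((P.map u).prod (P.map v))‖ ^ 2
      = (∫ p, ∫ q, k p.1 q.1 * l p.2 q.2
            ∂(P.map fun ω => (u ω, v ω)) ∂(P.map fun ω => (u ω, v ω)))
        + (∫ x, ∫ x', k x x' ∂(P.map u) ∂(P.map u))
            * (∫ y, ∫ y', l y y' ∂(P.map v) ∂(P.map v))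
        - 2 * ∫ p, (∫ x', k p.1 x' ∂(P.map u)) * (∫ y', l p.2 y' ∂(P.map v))
            ∂(P.map fun ω => (u ω, v ω)) := by
  obtain ⟨C, hC⟩ := hΦb
  have hint (μ : Measure (α × β)) [IsFiniteMeasure μ] : Integrable Φ μ :=
    .of_bound hΦm.aestronglyMeasurable C (.of_forall hC)
  have hkl (p q : α × β) : inner ℝ (Φ p) (Φ q) = k p.1 q.1 * l p.2 q.2 := hΦ p.1 q.1 p.2 q.2
  have hfactor (p : α × β) : ∫ q, k p.1 q.1 * l p.2 q.2 ∂((P.map u).prod (P.map v))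
      = (∫ x', k p.1 x' ∂(P.map u)) * ∫ y', l p.2 y' ∂(P.map v) :=
    integral_prod_mul (k p.1) (l p.2)
  rw [norm_integral_sub_integral_sq (hint _) (hint _)]
  simp only [hkl, hfactor]
  rw [integral_prod_mul (fun x => ∫ x', k x x' ∂(P.map u)) (fun y => ∫ y', l y y' ∂(P.map v))]

/-- HSIC expectation formula.  The squared Hilbert–Schmidt norm of the
cross-covariance operator equals the squared RKHS distance, in the tensor-product RKHS,
between the embedding of the joint law and the embedding of the product of the marginals;
here the tensor-product RKHS is modelled by a Hilbert space `T` with feature map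
`Φ : α × β → T` satisfying `⟪Φ(x,y), Φ(x',y')⟫ = k x x' · l y y'`.  With `(u,v), (u',v')`
iid copies of the joint variable,
`HSIC(u,v) = E[k(u,u') l(v,v')] + E[k(u,u')]·E[l(v,v')] − 2 E_{(u,v)}[E_{u'}[k(u,u')]·E_{v'}[l(v,v')]]`. -/
theorem hsic_expectation_formula
    {Ω α β : Type*} [MeasurableSpace Ω] [MeasurableSpace α] [MeasurableSpace β]
    (P : Measure Ω) [IsProbabilityMeasure P]
    {T : Type*} [NormedAddCommGroup T] [InnerProductSpace ℝ T] [CompleteSpace T]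
    (k : α → α → ℝ) (l : β → β → ℝ)
    (Φ : α × β → T) (hΦm : StronglyMeasurable Φ) (hΦb : ∃ Cb : ℝ, ∀ p, ‖Φ p‖ ≤ Cb)
    (hΦ : ∀ x x' y y', (inner ℝ (Φ (x, y)) (Φ (x', y')) : ℝ) = k x x' * l y y')
    (u : Ω → α) (v : Ω → β) (hu : Measurable u) (hv : Measurable v) :
    ‖(∫ p, Φ p ∂(P.map fun ω => (u ω, v ω)))
        - ∫ p, Φ p ∂((P.map u).prod (P.map v))‖ ^ 2
      = (∫ p, ∫ q, k p.1 q.1 * l p.2 q.2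
            ∂(P.map fun ω => (u ω, v ω)) ∂(P.map fun ω => (u ω, v ω)))
        + (∫ x, ∫ x', k x x' ∂(P.map u) ∂(P.map u))
            * (∫ y, ∫ y', l y y' ∂(P.map v) ∂(P.map v))
        - 2 * ∫ p, (∫ x', k p.1 x' ∂(P.map u)) * (∫ y', l p.2 y' ∂(P.map v))
            ∂(P.map fun ω => (u ω, v ω)) :=
  hsic_expectation_formula_general P k l Φ hΦm hΦb hΦ u v
end

section
/- HSIC(u, v) = 0 whenever u and v are independent, and conversely if both kernels k and l are characteristic (mean embeddings injective) and the product kernel k⊗l is characteristic on the product space, then HSIC(u, v) = 0 implies u and v are independent. -/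
open MeasureTheory ProbabilityTheory

theorem hsic_zero_iff_indep_general
    {Ω α β : Type*} [MeasurableSpace Ω] [MeasurableSpace α] [MeasurableSpace β]
    (P : Measure Ω) [IsProbabilityMeasure P]
    {T : Type*} [NormedAddCommGroup T] [InnerProductSpace ℝ T]
    (Φ : α × β → T)
    (u : Ω → α) (v : Ω → β) (hu : Measurable u) (hv : Measurable v) :
    (IndepFun u v P →
      ‖(∫ p, Φ p ∂(P.map fun ω => (u ω, v ω)))
          - ∫ p, Φ p ∂((P.map u).prod (P.map v))‖ ^ 2 = 0) ∧
    ((∀ (μ ν : Measure (α × β)), IsProbabilityMeasure μ → IsProbabilityMeasure ν →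
        (∫ p, Φ p ∂μ) = (∫ p, Φ p ∂ν) → μ = ν) →
      ‖(∫ p, Φ p ∂(P.map fun ω => (u ω, v ω)))
          - ∫ p, Φ p ∂((P.map u).prod (P.map v))‖ ^ 2 = 0 →
      IndepFun u v P) := by
  have indep_iff := indepFun_iff_map_prod_eq_prod_map_map (μ := P) hu.aemeasurable hv.aemeasurable
  refine ⟨fun hindep => by simp [indep_iff.1 hindep], fun hchar hsic => indep_iff.2 ?_⟩
  have : IsProbabilityMeasure (P.map u) := Measure.isProbabilityMeasure_map hu.aemeasurable
  have : IsProbabilityMeasure (P.map v) := Measure.isProbabilityMeasure_map hv.aemeasurable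
  refine hchar _ _ (Measure.isProbabilityMeasure_map (hu.prodMk hv).aemeasurable) inferInstance ?_
  simpa [sub_eq_zero] using hsic

/-- `HSIC(u,v) = ‖μ_{P_{uv}} − μ_{P_u ⊗ P_v}‖²` in the tensor-product RKHS
(modelled by a Hilbert space `T` with feature map `Φ` for the product kernel `k ⊗ l`)
vanishes whenever `u` and `v` are independent; conversely, if the product kernel `k ⊗ l`
is characteristic on the product space (its mean embedding is injective on Borel
probability measures), then `HSIC(u,v) = 0` implies that `u` and `v` are independent. -/
theorem hsic_zero_iff_indep
    {Ω α β : Type*} [MeasurableSpace Ω] [MeasurableSpace α] [MeasurableSpace β]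
    (P : Measure Ω) [IsProbabilityMeasure P]
    {T : Type*} [NormedAddCommGroup T] [InnerProductSpace ℝ T] [CompleteSpace T]
    (k : α → α → ℝ) (l : β → β → ℝ)
    (Φ : α × β → T) (hΦm : StronglyMeasurable Φ) (hΦb : ∃ Cb : ℝ, ∀ p, ‖Φ p‖ ≤ Cb)
    (hΦ : ∀ x x' y y', (inner ℝ (Φ (x, y)) (Φ (x', y')) : ℝ) = k x x' * l y y')
    (u : Ω → α) (v : Ω → β) (hu : Measurable u) (hv : Measurable v) :
    (IndepFun u v P →
      ‖(∫ p, Φ p ∂(P.map fun ω => (u ω, v ω)))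
          - ∫ p, Φ p ∂((P.map u).prod (P.map v))‖ ^ 2 = 0) ∧
    ((∀ (μ ν : Measure (α × β)), IsProbabilityMeasure μ → IsProbabilityMeasure ν →
        (∫ p, Φ p ∂μ) = (∫ p, Φ p ∂ν) → μ = ν) →
      ‖(∫ p, Φ p ∂(P.map fun ω => (u ω, v ω)))
          - ∫ p, Φ p ∂((P.map u).prod (P.map v))‖ ^ 2 = 0 →
      IndepFun u v P) :=
  hsic_zero_iff_indep_general P Φ u v hu hv
end

section
/- The dHSIC population value, defined as the squared RKHS norm ‖μ_{P} − μ_{P^1 ⊗ ··· ⊗ P^d}‖² in the tensor product RKHS of the joint distribution P of (X^1,...,X^d) versus the product of its marginals, is nonnegative, and equals zero if and only if X^1, ..., X^d are mutually independent, provided the canonical tensor-product kernel ⊗_j k^j is characteristic on the product space. -/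
open MeasureTheory

theorem sq_norm_integral_sub_integral_eq_zero_iff {Ω E : Type*} [MeasurableSpace Ω]
    [NormedAddCommGroup E] [NormedSpace ℝ E] {Φ : Ω → E}
    (hΦ : ∀ μ ν : Measure Ω, IsProbabilityMeasure μ → IsProbabilityMeasure ν →
      (∫ x, Φ x ∂μ) = (∫ x, Φ x ∂ν) → μ = ν)
    (μ ν : Measure Ω) [IsProbabilityMeasure μ] [IsProbabilityMeasure ν] :
    ‖(∫ x, Φ x ∂μ) - ∫ x, Φ x ∂ν‖ ^ 2 = 0 ↔ μ = ν := by
  rw [sq_eq_zero_iff, norm_eq_zero, sub_eq_zero]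
  exact ⟨hΦ μ ν ‹_› ‹_›, fun h => h ▸ rfl⟩

theorem dhsic_nonneg_and_zero_iff_indep_general
    {d : ℕ} {α : Fin d → Type*} [∀ j, MeasurableSpace (α j)]
    {T : Type*} [NormedAddCommGroup T] [InnerProductSpace ℝ T]
    (Φ : (∀ j, α j) → T)
    (P : Measure (∀ j, α j)) [IsProbabilityMeasure P]
    (Pm : ∀ j, Measure (α j)) [∀ j, IsProbabilityMeasure (Pm j)] :
    0 ≤ ‖(∫ x, Φ x ∂P) - ∫ x, Φ x ∂(Measure.pi Pm)‖ ^ 2 ∧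
    ((∀ (μ ν : Measure (∀ j, α j)), IsProbabilityMeasure μ → IsProbabilityMeasure ν →
        (∫ x, Φ x ∂μ) = (∫ x, Φ x ∂ν) → μ = ν) →
      (‖(∫ x, Φ x ∂P) - ∫ x, Φ x ∂(Measure.pi Pm)‖ ^ 2 = 0 ↔ P = Measure.pi Pm)) :=
  ⟨sq_nonneg _, fun hchar => sq_norm_integral_sub_integral_eq_zero_iff hchar P _⟩

/-- The population dHSIC, defined as the squared RKHS norm
`‖μ_P − μ_{P¹⊗···⊗P^d}‖²` in the tensor-product RKHS (modelled by a Hilbert space `T` with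
feature map `Φ` for the canonical tensor-product kernel `⊗_j k^j`) of the joint law `P` of
`(X¹,…,X^d)` versus the product of its marginals, is nonnegative; and it equals zero if
and only if `X¹,…,X^d` are mutually independent (the joint law equals the product of the
marginals), provided the tensor-product kernel is characteristic on the product space. -/
theorem dhsic_nonneg_and_zero_iff_indep
    {d : ℕ} {α : Fin d → Type*} [∀ j, MeasurableSpace (α j)]
    {T : Type*} [NormedAddCommGroup T] [InnerProductSpace ℝ T] [CompleteSpace T]
    (k : ∀ j, α j → α j → ℝ)
    (Φ : (∀ j, α j) → T) (hΦm : StronglyMeasurable Φ) (hΦb : ∃ Cb : ℝ, ∀ x, ‖Φ x‖ ≤ Cb)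
    (hΦ : ∀ x y : ∀ j, α j, (inner ℝ (Φ x) (Φ y) : ℝ) = ∏ j, k j (x j) (y j))
    (P : Measure (∀ j, α j)) [IsProbabilityMeasure P]
    (Pm : ∀ j, Measure (α j)) [∀ j, IsProbabilityMeasure (Pm j)]
    (hPm : ∀ j, Pm j = P.map (fun x => x j)) :
    0 ≤ ‖(∫ x, Φ x ∂P) - ∫ x, Φ x ∂(Measure.pi Pm)‖ ^ 2 ∧
    ((∀ (μ ν : Measure (∀ j, α j)), IsProbabilityMeasure μ → IsProbabilityMeasure ν →
        (∫ x, Φ x ∂μ) = (∫ x, Φ x ∂ν) → μ = ν) →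
      (‖(∫ x, Φ x ∂P) - ∫ x, Φ x ∂(Measure.pi Pm)‖ ^ 2 = 0 ↔ P = Measure.pi Pm)) :=
  dhsic_nonneg_and_zero_iff_indep_general Φ P Pm
end
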